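/- Let M = I − Δ be an r × r real matrix where r ≥ 4 and every entry of Δ has absolute value at most 1/r². Let y be a vector with all entries in {1/4, 3/4}. Then M is invertible and the vector x = M^{-1} y has all entries in the interval [0, 1]. -/

import Mathlib

/-!
In the row-sum (`ℓ∞` operator) norm, `‖Δ‖ ≤ r · 1/r² = 1/r ≤ 1/4`, so `1 - Δ` is invertible by the
Neumann series, and `Γ = (1 - Δ)⁻¹ - 1` satisfies `Γ = Δ + ΓΔ`, whence `‖Γ‖ ≤ ‖Δ‖ / (1 - ‖Δ‖) ≤ 1/3`.
Thus `x = y + Γ y` moves each entry of `y ∈ {1/4, 3/4}ʳ` by at most `1/3 · 3/4 = 1/4`.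
-/

attribute [local instance] Matrix.linftyOpNormedRing Matrix.linftyOpSeminormedAddCommGroup

theorem norm_sub_one_le_of_mul_one_sub_eq_one {R : Type*} [NormedRing R] {x b : R}
    (hb : b * (1 - x) = 1) (hx : ‖x‖ < 1) : ‖b - 1‖ ≤ ‖x‖ / (1 - ‖x‖) := by
  have hfix : b - 1 = x + (b - 1) * x :=
    calc b - 1 = b - b * (1 - x) := by rw [hb]
      _ = x + (b - 1) * x := by noncomm_ring
  have : ‖b - 1‖ ≤ ‖x‖ + ‖b - 1‖ * ‖x‖ :=
    calc ‖b - 1‖ = ‖x + (b - 1) * x‖ := congrArg _ hfix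
      _ ≤ ‖x‖ + ‖b - 1‖ * ‖x‖ := (norm_add_le _ _).trans (by gcongr; exact norm_mul_le _ _)
  rw [le_div_iff₀ (by linarith)]
  linarith

namespace Matrix

variable {m n α : Type*} [Fintype m] [Fintype n]

theorem linfty_opNorm_le_card_mul_of_norm_le [SeminormedAddCommGroup α] {A : Matrix m n α}
    {c : ℝ} (hc : 0 ≤ c) (hA : ∀ i j, ‖A i j‖ ≤ c) : ‖A‖ ≤ Fintype.card n * c := by
  lift c to NNReal using hc
  rw [← coe_nnnorm, linfty_opNNNorm_def]
  norm_cast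
  refine Finset.sup_le fun i _ => ?_
  calc ∑ j, ‖A i j‖₊ ≤ ∑ _j : n, c := Finset.sum_le_sum fun j _ => NNReal.coe_le_coe.mp (hA i j)
    _ = Fintype.card n * c := by simp

variable [DecidableEq n]

theorem norm_mulVec_apply_sub_le [NormedRing α] (B : Matrix n n α) (v : n → α) (j : n) :
    ‖(B *ᵥ v) j - v j‖ ≤ ‖B - 1‖ * ‖v‖ :=
  calc ‖(B *ᵥ v) j - v j‖ = ‖((B - 1) *ᵥ v) j‖ := by rw [sub_mulVec, one_mulVec, Pi.sub_apply]
    _ ≤ ‖(B - 1) *ᵥ v‖ := norm_le_pi_norm _ j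
    _ ≤ ‖B - 1‖ * ‖v‖ := linfty_opNorm_mulVec _ _

-- Instance search finds `CompleteSpace` only for the product uniformity, which is the `ℓ∞`
-- operator norm's uniformity only up to unfolding; hence the explicit argument.
theorem linftyOp_hasSummableGeomSeries [NormedRing α] [CompleteSpace α] :
    HasSummableGeomSeries (Matrix n n α) :=
  have : CompleteSpace (Matrix n n α) := inferInstanceAs (CompleteSpace (n → n → α))
  @instHasSummableGeomSeriesOfCompleteSpace _ _ this

end Matrix

attribute [local instance] Matrix.linftyOp_hasSummableGeomSeries

theorem inverse_preserves_unit_interval (r : ℕ) (hr : 4 ≤ r)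
    (Δ : Matrix (Fin r) (Fin r) ℝ)
    (hΔ : ∀ j k, |Δ j k| ≤ 1 / (r : ℝ) ^ 2)
    (y : Fin r → ℝ) (hy : ∀ j, y j = 1 / 4 ∨ y j = 3 / 4) :
    IsUnit (1 - Δ) ∧
      ∀ j, 0 ≤ ((1 - Δ)⁻¹.mulVec y) j ∧ ((1 - Δ)⁻¹.mulVec y) j ≤ 1 := by
  have hr' : (4 : ℝ) ≤ r := by exact_mod_cast hr
  have hΔ_norm : ‖Δ‖ ≤ 1 / 4 :=
    calc ‖Δ‖ ≤ Fintype.card (Fin r) * (1 / (r : ℝ) ^ 2) :=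
          Matrix.linfty_opNorm_le_card_mul_of_norm_le (by positivity) hΔ
      _ = 1 / r := by rw [Fintype.card_fin]; field_simp
      _ ≤ 1 / 4 := by gcongr
  have hΔ_lt : ‖Δ‖ < 1 := by linarith
  have hunit : IsUnit (1 - Δ) := (Units.oneSub Δ hΔ_lt).isUnit
  have hΓ_norm : ‖(1 - Δ)⁻¹ - 1‖ ≤ 1 / 3 := by
    have hinv := Matrix.nonsing_inv_mul _ ((Matrix.isUnit_iff_isUnit_det _).mp hunit)
    refine (norm_sub_one_le_of_mul_one_sub_eq_one hinv hΔ_lt).trans ?_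
    rw [div_le_iff₀ (by linarith)]
    linarith
  have hy_norm : ‖y‖ ≤ 3 / 4 := (pi_norm_le_iff_of_nonneg (by norm_num)).2 fun j => by
    rcases hy j with h | h <;> norm_num [h]
  refine ⟨hunit, fun j => ?_⟩
  have hdev : ‖((1 - Δ)⁻¹.mulVec y) j - y j‖ ≤ 1 / 4 :=
    calc ‖((1 - Δ)⁻¹.mulVec y) j - y j‖ ≤ ‖(1 - Δ)⁻¹ - 1‖ * ‖y‖ :=
          Matrix.norm_mulVec_apply_sub_le _ _ j
      _ ≤ 1 / 3 * (3 / 4) := by gcongr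
      _ = 1 / 4 := by norm_num
  rw [Real.norm_eq_abs, abs_le] at hdev
  rcases hy j with h | h <;> constructor <;> linarith [hdev.1, hdev.2]
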